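/- arXiv:1511.04127 — 5 statements merged into one kernel-verified Lean document; each statement's English description precedes it below -/
import Mathlib

section
/- For the Eberhard expression J(Q) := P(++|ab) − P(+0|ab') − P(0+|a'b) − P(++|a'b') evaluated on a distribution Q = p_PR·PR₁ + Σ_{i∈S} p_i·D_i (convex combination with S the eight CHSH-saturating deterministic distributions), one has J(Q) = p_PR/2. In particular J(D) ≤ 0 for every local deterministic distribution D. -/
/-- Indices of ℝ^16: ((A,B),(X,Y)), settings `true = a, b`, `false = a', b'`;
outcomes `true = +`, `false = 0`. -/
abbrev Idx : Type := (Bool × Bool) × (Bool × Bool)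

/-- The local deterministic distribution given by outcome assignments. -/
noncomputable def det (fA fB : Bool → Bool) : Idx → ℝ :=
  fun i => if i.2.1 = fA i.1.1 ∧ i.2.2 = fB i.1.2 then 1 else 0

/-- PR box 1: rows ab, ab', a'b are (1/2,0,0,1/2); row a'b' is (0,1/2,1/2,0). -/
noncomputable def PR1 : Idx → ℝ :=
  fun i => if i.1 = (false, false) then (if i.2.1 = i.2.2 then 0 else 1/2)
    else (if i.2.1 = i.2.2 then 1/2 else 0)

def sgnZ (b : Bool) : ℤ := if b then 1 else -1

/-- CHSH value of a local deterministic strategy. -/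
def chshZ (st : (Bool → Bool) × (Bool → Bool)) : ℤ :=
  sgnZ (st.1 true) * sgnZ (st.2 true) + sgnZ (st.1 true) * sgnZ (st.2 false) +
    sgnZ (st.1 false) * sgnZ (st.2 true) - sgnZ (st.1 false) * sgnZ (st.2 false)

/-- The set S of the eight CHSH-saturating deterministic strategies. -/
def Sat : Finset ((Bool → Bool) × (Bool → Bool)) :=
  Finset.univ.filter (fun st => chshZ st = 2)

/-- The Eberhard expression J(Q) = P(++|ab) − P(+0|ab') − P(0+|a'b) − P(++|a'b'). -/
noncomputable def J (Q : Idx → ℝ) : ℝ :=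
  Q ((true, true), (true, true)) - Q ((true, false), (true, false)) -
    Q ((false, true), (false, true)) - Q ((false, false), (true, true))

lemma detJ (fA fB : Bool → Bool) :
    J (det fA fB) ≤ 0 ∧ (chshZ (fA, fB) = 2 → J (det fA fB) = 0) := by
  cases h1 : fA true <;> cases h2 : fA false <;> cases h3 : fB true <;>
    cases h4 : fB false <;>
    simp [J, det, chshZ, sgnZ, h1, h2, h3, h4] <;> norm_num

/-- For a convex combination Q = p_PR·PR₁ + Σ_{i∈S} p_i·D_i (S the eight
CHSH-saturating deterministic distributions), J(Q) = p_PR/2; and J(D) ≤ 0 for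
every local deterministic distribution D. -/
theorem eberhard_measures_pr_weight
    (pPR : ℝ) (p : ((Bool → Bool) × (Bool → Bool)) → ℝ)
    (hPR : 0 ≤ pPR) (hp : ∀ st, 0 ≤ p st)
    (hsum : pPR + ∑ st ∈ Sat, p st = 1) :
    J (fun i => pPR * PR1 i + ∑ st ∈ Sat, p st * det st.1 st.2 i) = pPR / 2 ∧
    ∀ fA fB : Bool → Bool, J (det fA fB) ≤ 0 := by

  constructor
  · simp only [J]
    have hz : ∀ st ∈ Sat,
        p st * det st.1 st.2 ((true, true), (true, true)) -
          p st * det st.1 st.2 ((true, false), (true, false)) -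
          p st * det st.1 st.2 ((false, true), (false, true)) -
          p st * det st.1 st.2 ((false, false), (true, true)) = 0 := by
      intro st hst
      have h2 : chshZ st = 2 := (Finset.mem_filter.mp hst).2
      have := (detJ st.1 st.2).2 (by simpa using h2)
      simp only [J] at this
      linear_combination p st * this
    have hsz : ∑ st ∈ Sat,
        (p st * det st.1 st.2 ((true, true), (true, true)) -
          p st * det st.1 st.2 ((true, false), (true, false)) -
          p st * det st.1 st.2 ((false, true), (false, true)) -
          p st * det st.1 st.2 ((false, false), (true, true))) = 0 :=
      Finset.sum_eq_zero hz
    simp only [Finset.sum_sub_distrib] at hsz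
    simp only [PR1]
    norm_num
    linarith [hsz]
  · intro fA fB
    exact (detJ fA fB).1
end

section
/- In the (2,2,2) scenario, the CHSH expression E_{ab} + E_{ab'} + E_{a'b} − E_{a'b'} − 2, evaluated on any distribution matrix (where E_{xy} is computed by assigning +1 to outcome '+' and −1 to outcome '0'), equals twice the sum of the eight variant-Eberhard expressions obtained from the eight triangles of CHSH-saturating deterministic distributions; in particular, for Q = p_PR·PR₁ + Σ_{i∈S} p_i·D_i, the CHSH value of Q equals 2 + 2·p_PR. -/
/-- Sign of a Boolean outcome: `true = +` ↦ +1, `false = 0` ↦ −1. -/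
noncomputable def sgn (b : Bool) : ℝ := if b then 1 else -1

/-- Correlator of a distribution matrix at setting pair `s`. -/
noncomputable def corr (Q : Idx → ℝ) (s : Bool × Bool) : ℝ :=
  ∑ o : Bool × Bool, Q (s, o) * sgn o.1 * sgn o.2

lemma corr_det (fA fB : Bool → Bool) (s : Bool × Bool) :
    corr (det fA fB) s = sgn (fA s.1) * sgn (fB s.2) := by
  cases hfa : fA s.1 <;> cases hfb : fB s.2 <;>
    simp [corr, det, sgn, Fintype.sum_prod_type, hfa, hfb]

lemma corr_lin (pPR : ℝ) (p : ((Bool → Bool) × (Bool → Bool)) → ℝ) (s : Bool × Bool) :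
    corr (fun i => pPR * PR1 i + ∑ st ∈ Sat, p st * det st.1 st.2 i) s =
      pPR * corr PR1 s + ∑ st ∈ Sat, p st * corr (det st.1 st.2) s := by
  simp only [corr, add_mul, Finset.sum_mul, Finset.sum_add_distrib, Finset.mul_sum,
    mul_assoc]
  rw [Finset.sum_comm]

lemma corr_PR1 : corr PR1 (true, true) + corr PR1 (true, false) + corr PR1 (false, true)
    - corr PR1 (false, false) = 4 := by
  simp [corr, PR1, Fintype.sum_prod_type, sgn]
  norm_num

/-- If Q = p_PR·PR₁ + Σ_{i∈S} p_i·D_i is a convex combination (S the eight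
CHSH-saturating deterministic distributions), then the CHSH value of Q equals
2 + 2·p_PR: the CHSH violation is a constant multiple of the amount of PR box. -/
theorem chsh_value_of_decomposition
    (pPR : ℝ) (p : ((Bool → Bool) × (Bool → Bool)) → ℝ)
    (hPR : 0 ≤ pPR) (hp : ∀ st, 0 ≤ p st)
    (hsum : pPR + ∑ st ∈ Sat, p st = 1) :
    corr (fun i => pPR * PR1 i + ∑ st ∈ Sat, p st * det st.1 st.2 i) (true, true) +
      corr (fun i => pPR * PR1 i + ∑ st ∈ Sat, p st * det st.1 st.2 i) (true, false) +
      corr (fun i => pPR * PR1 i + ∑ st ∈ Sat, p st * det st.1 st.2 i) (false, true) -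
      corr (fun i => pPR * PR1 i + ∑ st ∈ Sat, p st * det st.1 st.2 i) (false, false) =
    2 + 2 * pPR := by
  simp only [corr_lin]
  have key : ∀ st ∈ Sat, p st * corr (det st.1 st.2) (true, true)
      + p st * corr (det st.1 st.2) (true, false)
      + p st * corr (det st.1 st.2) (false, true)
      - p st * corr (det st.1 st.2) (false, false) = 2 * p st := by
    intro st hst
    have h2 : chshZ st = 2 := by simpa [Sat] using hst
    have : corr (det st.1 st.2) (true, true) + corr (det st.1 st.2) (true, false)
        + corr (det st.1 st.2) (false, true) - corr (det st.1 st.2) (false, false)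
        = ((chshZ st : ℤ) : ℝ) := by
      simp only [corr_det, chshZ, sgn, sgnZ]
      push_cast
      ring
    rw [h2] at this
    push_cast at this
    linear_combination (p st) * this
  have hS : ∑ st ∈ Sat, p st * corr (det st.1 st.2) (true, true)
      + ∑ st ∈ Sat, p st * corr (det st.1 st.2) (true, false)
      + ∑ st ∈ Sat, p st * corr (det st.1 st.2) (false, true)
      - ∑ st ∈ Sat, p st * corr (det st.1 st.2) (false, false)
      = 2 * ∑ st ∈ Sat, p st := by
    rw [Finset.mul_sum, ← Finset.sum_add_distrib, ← Finset.sum_add_distrib,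
      ← Finset.sum_sub_distrib]
    exact Finset.sum_congr rfl key
  have h4 := corr_PR1
  nlinarith [hS, h4, hsum]
end

section
/- Detection-efficiency threshold for PR₁: the distribution η²·PR₁ + η(1−η)·(D₂+D₄)/2 + η(1−η)·(D₃+D₄)/2 + (1−η)²·D₄ satisfies the CHSH inequality (value ≤ 2) if and only if η ≤ 2/3. -/
/-- D₂: Alice +,+; Bob 0,0. -/
noncomputable def D2 : Idx → ℝ := det (fun _ => true) (fun _ => false)
/-- D₃: Alice 0,0; Bob +,+. -/
noncomputable def D3 : Idx → ℝ := det (fun _ => false) (fun _ => true)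
/-- D₄: 0 on all settings. -/
noncomputable def D4 : Idx → ℝ := det (fun _ => false) (fun _ => false)

/-- The PR box transformed by symmetric detection efficiency η. -/
noncomputable def etaPR (η : ℝ) : Idx → ℝ := fun i =>
  η ^ 2 * PR1 i + (η * (1 - η) / 2) * (D2 i + D4 i) +
    (η * (1 - η) / 2) * (D3 i + D4 i) + (1 - η) ^ 2 * D4 i

/-- Detection-efficiency threshold: the η-transformed PR box satisfies the CHSH
inequality if and only if η ≤ 2/3. -/
theorem detection_efficiency_threshold (η : ℝ) (h0 : 0 ≤ η) (h1 : η ≤ 1) :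
    (corr (etaPR η) (true, true) + corr (etaPR η) (true, false) +
      corr (etaPR η) (false, true) - corr (etaPR η) (false, false) ≤ 2) ↔
    η ≤ 2 / 3 := by
  simp only [corr, etaPR, PR1, D2, D3, D4, det, sgn, Fintype.sum_prod_type,
    Fintype.sum_bool]
  norm_num
  constructor <;> intro h <;> nlinarith [sq_nonneg η, sq_nonneg (1 - η)]
end

section
/- For any generalized PR box P and any local deterministic distribution D in the n-fold chained Bell scenario, the number of outcome rows in which D places probability 1 on an outcome to which P assigns probability 0 is odd. -/
/-- Alice's setting index in row `k` of the chained Bell cycle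
a₁b₁, a₂b₁, a₂b₂, a₃b₂, …, aₙbₙ, a₁bₙ (0-based indices, mod n). -/
def aliceIdx (n : ℕ) (k : Fin (2 * n)) : ZMod n := (((k : ℕ) + 1) / 2 : ℕ)

/-- Bob's setting index in row `k` of the chained Bell cycle. -/
def bobIdx (n : ℕ) (k : Fin (2 * n)) : ZMod n := (((k : ℕ)) / 2 : ℕ)

/-- Boolean indicator in `ZMod 2`. -/
def bI (b : Bool) : ZMod 2 := if b then 1 else 0

lemma odd_iff_zmod (N : ℕ) : Odd N ↔ (N : ZMod 2) = 1 := by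
  rw [Nat.odd_iff, ← ZMod.natCast_mod N 2]
  rcases Nat.mod_two_eq_zero_or_one N with h | h <;> rw [h] <;> simp

lemma zmod2_add_self (a : ZMod 2) : a + a = 0 := by revert a; decide

lemma sum_bob (n : ℕ) (f : ZMod n → ZMod 2) :
    ∑ k : Fin (2 * n), f (bobIdx n k) = 0 := by
  refine Finset.sum_ninvolution
    (fun (k : Fin (2 * n)) =>
      (⟨if (k : ℕ) % 2 = 0 then (k : ℕ) + 1 else (k : ℕ) - 1,
        by have := k.isLt; split <;> omega⟩ : Fin (2 * n)))
    (fun k => ?_) (fun k _ heq => ?_) (fun k => Finset.mem_univ _) (fun k => ?_)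
  · have hdiv : ((if (k : ℕ) % 2 = 0 then (k : ℕ) + 1 else (k : ℕ) - 1) / 2)
        = (k : ℕ) / 2 := by split <;> omega
    show f (bobIdx n k) + f (bobIdx n _) = 0
    unfold bobIdx
    simp only [hdiv]
    exact zmod2_add_self _
  · have := congrArg Fin.val heq
    simp only at this
    split at this <;> omega
  · apply Fin.ext
    simp only
    split <;> split <;> omega

lemma alice_eq_bob_succ (n : ℕ) (hn : 0 < n) (k : Fin (2 * n)) :
    haveI : NeZero (2 * n) := ⟨by omega⟩
    aliceIdx n k = bobIdx n (k + 1) := by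
  haveI : NeZero (2 * n) := ⟨by omega⟩
  have h1 : ((1 : Fin (2 * n)) : ℕ) = 1 := by
    have h2 : 1 < 2 * n := by omega
    simp [Fin.val_one', Nat.mod_eq_of_lt h2]
  have hval : ((k + 1 : Fin (2 * n)) : ℕ) = ((k : ℕ) + 1) % (2 * n) := by
    rw [Fin.add_def, h1]
  unfold aliceIdx bobIdx
  rw [hval]
  rcases lt_or_ge ((k : ℕ) + 1) (2 * n) with h | h
  · rw [Nat.mod_eq_of_lt h]
  · have hk : (k : ℕ) + 1 = 2 * n := by have := k.isLt; omega
    rw [hk, Nat.mod_self]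
    have : (2 * n) / 2 = n := by omega
    rw [this]
    simp [ZMod.natCast_self]

lemma sum_alice (n : ℕ) (hn : 0 < n) (f : ZMod n → ZMod 2) :
    ∑ k : Fin (2 * n), f (aliceIdx n k) = 0 := by
  haveI : NeZero (2 * n) := ⟨by omega⟩
  rw [show (∑ k : Fin (2 * n), f (aliceIdx n k))
      = ∑ k : Fin (2 * n), f (bobIdx n k) from
    Fintype.sum_equiv (Equiv.addRight (1 : Fin (2 * n))) _ _
      (fun k => by rw [alice_eq_bob_succ n hn k]; rfl)]
  exact sum_bob n f

/-- For a generalized PR box (row types `c`, `true` = correlated with support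
{++,00}, `false` = anticorrelated with support {+0,0+}, oddly many
anticorrelated rows) and a local deterministic distribution (assignments `x`
for Alice, `y` for Bob, `true = +`), the number of rows where the deterministic
outcome lies outside the support of the PR box's row is odd. -/
theorem odd_support_mismatches (n : ℕ) (hn : 0 < n)
    (c : Fin (2 * n) → Bool)
    (hodd : Odd (Finset.univ.filter (fun k => c k = false)).card)
    (x y : ZMod n → Bool) :
    Odd (Finset.univ.filter (fun k : Fin (2 * n) =>
      (x (aliceIdx n k) == y (bobIdx n k)) ≠ c k)).card := by
  rw [odd_iff_zmod, Finset.card_filter, Nat.cast_sum]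
  have key : ∀ p q r : Bool,
      (((if (p == q) ≠ r then 1 else 0 : ℕ)) : ZMod 2)
        = bI p + bI q + bI r + 1 := by decide
  calc (∑ k : Fin (2 * n),
        (((if (x (aliceIdx n k) == y (bobIdx n k)) ≠ c k then 1 else 0 : ℕ)) : ZMod 2))
      = ∑ k : Fin (2 * n),
        (bI (x (aliceIdx n k)) + bI (y (bobIdx n k)) + bI (c k) + 1) := by
        exact Finset.sum_congr rfl (fun k _ => key _ _ _)
    _ = (∑ k : Fin (2 * n), bI (x (aliceIdx n k)))
        + (∑ k : Fin (2 * n), bI (y (bobIdx n k)))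
        + (∑ k : Fin (2 * n), bI (c k))
        + (∑ _k : Fin (2 * n), (1 : ZMod 2)) := by
        rw [Finset.sum_add_distrib, Finset.sum_add_distrib, Finset.sum_add_distrib]
    _ = 1 := by
        rw [sum_alice n hn (fun i => bI (x i)), sum_bob n (fun i => bI (y i))]
        have h2n : ((2 * n : ℕ) : ZMod 2) = 0 := by
          rw [Nat.cast_mul]
          exact mul_eq_zero_of_left (by decide) _
        have hsum1 : (∑ _k : Fin (2 * n), (1 : ZMod 2)) = 0 := by
          rw [Finset.sum_const, Finset.card_univ, Fintype.card_fin]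
          simpa using h2n
        have hc : (∑ k : Fin (2 * n), bI (c k)) = 1 := by
          have hb : (∑ k : Fin (2 * n), bI (c k))
              = ((Finset.univ.filter (fun k : Fin (2 * n) => c k = true)).card : ZMod 2) := by
            rw [← Finset.sum_boole]
            exact Finset.sum_congr rfl (fun k _ => by simp [bI])
          have hsplit := Finset.card_filter_add_card_filter_not
            (s := (Finset.univ : Finset (Fin (2 * n))))
            (p := fun k => c k = true)
          have hneg : (Finset.univ.filter (fun k : Fin (2 * n) => ¬ (c k = true)))
              = (Finset.univ.filter (fun k : Fin (2 * n) => c k = false)) := by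
            apply Finset.filter_congr
            intro k _
            simp
          rw [hneg, Finset.card_univ, Fintype.card_fin] at hsplit
          rw [Nat.odd_iff] at hodd
          have hoddtrue : Odd (Finset.univ.filter (fun k : Fin (2 * n) => c k = true)).card := by
            rw [Nat.odd_iff]
            omega
          rw [hb, ← odd_iff_zmod]
          exact hoddtrue
        rw [hsum1, hc]
        ring
end

section
/- Every local deterministic distribution in the n-fold chained Bell scenario satisfies the chained Bell inequality: I_n := Σ_{x=1}^{n−1} [P(X≠Y | a_x b_x) + P(X≠Y | a_x b_{x+1})] + P(X≠Y | a_n b_n) + P(X=Y | a_n b_1) ≥ 1. -/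
/-- Every local deterministic distribution in the n-fold chained Bell scenario
satisfies the chained Bell inequality I_n ≥ 1. Here the deterministic
assignments are `x` (Alice) and `y` (Bob), with settings indexed 1,…,n and
outcomes in {+,0} encoded by `Bool`; under setting pair a_i b_j one has
P(X≠Y) = 1 iff x i ≠ y j, and P(X=Y) = 1 − P(X≠Y). -/
theorem chained_bell_deterministic (n : ℕ) (hn : 1 ≤ n) (x y : ℕ → Bool) :
    1 ≤ (∑ j ∈ Finset.range (n - 1),
          ((if x (j + 1) ≠ y (j + 1) then 1 else 0) +
            (if x (j + 1) ≠ y (j + 2) then 1 else 0))) +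
        (if x n ≠ y n then (1 : ℕ) else 0) +
        (if x n = y 1 then (1 : ℕ) else 0) := by
  by_contra h
  push_neg at h
  rw [Nat.lt_one_iff, Nat.add_eq_zero, Nat.add_eq_zero] at h
  obtain ⟨⟨hsum, hlast⟩, heq⟩ := h
  rw [Finset.sum_eq_zero_iff] at hsum
  have hne : x n ≠ y 1 := by
    intro hxy
    simp [hxy] at heq
  have hxn : x n = y n := by
    by_contra hxy
    simp [hxy] at hlast
  have hchain : ∀ j < n - 1, y (j + 1) = y (j + 2) := by
    intro j hj
    have := hsum j (Finset.mem_range.mpr hj)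
    rw [Nat.add_eq_zero] at this
    obtain ⟨h1, h2⟩ := this
    have e1 : x (j + 1) = y (j + 1) := by
      by_contra hxy; simp [hxy] at h1
    have e2 : x (j + 1) = y (j + 2) := by
      by_contra hxy; simp [hxy] at h2
    rw [← e1, e2]
  have hy : ∀ k, k ≤ n - 1 → y 1 = y (k + 1) := by
    intro k
    induction k with
    | zero => intro _; rfl
    | succ m ih =>
      intro hm
      have := hchain m (by omega)
      rw [ih (by omega), this]
  have := hy (n - 1) le_rfl
  have hn1 : n - 1 + 1 = n := by omega
  rw [hn1] at this
  exact hne (hxn.trans this.symm)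
end
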